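/- Disjunction synthesis combination: suppose for i = 1,2 there are arrow updates (U_i,o_i) with ⊨ ⟨↑⟩φ_i ↔ ⟨U_i,o_i⟩φ_i. Construct U with outcomes {o} ∪ O_1 ∪ O_2, keeping all arrows of U_1 and U_2, and adding for each arrow (o_1,ψ)→_a(o',ψ') of U_1 an arrow (o, ψ∧⟨U_1,o_1⟩φ_1)→_a(o',ψ'), and for each arrow (o_2,ψ)→_a(o',ψ') of U_2 an arrow (o, ψ∧¬⟨U_1,o_1⟩φ_1)→_a(o',ψ'). Then ⊨ ⟨↑⟩(φ_1∨φ_2) ↔ ⟨U,o⟩(φ_1∨φ_2). -/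

import Mathlib

namespace AAUML

/-- Formulas of arbitrary arrow update model logic over atoms `P` and agents `A`.
An arrow update model is encoded as a finite list of arrows
`(agent, source outcome, source condition, target outcome, target condition)`,
with outcomes drawn from `ℕ`; `upd U o φ` is `[U,o]φ` and `all φ` is `[↑]φ`. -/
inductive Form (P A : Type) : Type where
  | atom : P → Form P A
  | neg  : Form P A → Form P A
  | and  : Form P A → Form P A → Form P A
  | box  : A → Form P A → Form P A
  | upd  : List (A × ℕ × Form P A × ℕ × Form P A) → ℕ → Form P A → Form P A
  | all  : Form P A → Form P A

/-- An arrow: agent, source outcome, source condition, target outcome, target condition. -/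
abbrev Arrow (P A : Type) := A × ℕ × Form P A × ℕ × Form P A

/-- Formulas of basic multi-agent modal logic: no update modality, no quantifier. -/
inductive Form.Modal {P A : Type} : Form P A → Prop
  | atom (p : P) : Form.Modal (.atom p)
  | neg {φ : Form P A} : Form.Modal φ → Form.Modal (.neg φ)
  | and {φ ψ : Form P A} : Form.Modal φ → Form.Modal ψ → Form.Modal (.and φ ψ)
  | box (a : A) {φ : Form P A} : Form.Modal φ → Form.Modal (.box a φ)

/-- Formulas of arrow update model logic (no arbitrary-update quantifier anywhere,
including inside the conditions of arrow update models). -/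
inductive Form.NoQuant {P A : Type} : Form P A → Prop
  | atom (p : P) : Form.NoQuant (.atom p)
  | neg {φ : Form P A} : Form.NoQuant φ → Form.NoQuant (.neg φ)
  | and {φ ψ : Form P A} : Form.NoQuant φ → Form.NoQuant ψ → Form.NoQuant (.and φ ψ)
  | box (a : A) {φ : Form P A} : Form.NoQuant φ → Form.NoQuant (.box a φ)
  | upd {U : List (Arrow P A)} (o : ℕ) {φ : Form P A} : Form.NoQuant φ →
      (∀ ar ∈ U, Form.NoQuant ar.2.2.1) → (∀ ar ∈ U, Form.NoQuant ar.2.2.2.2) →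
      Form.NoQuant (.upd U o φ)

/-- Propositional formulas (no modalities at all). -/
inductive Form.Prp {P A : Type} : Form P A → Prop
  | atom (p : P) : Form.Prp (.atom p)
  | neg {φ : Form P A} : Form.Prp φ → Form.Prp (.neg φ)
  | and {φ ψ : Form P A} : Form.Prp φ → Form.Prp ψ → Form.Prp (.and φ ψ)

/-- A relational (Kripke) model. -/
structure KModel (P A : Type) : Type 1 where
  World : Type
  R : A → World → World → Prop
  V : World → P → Prop

variable {P A : Type}

/-- Satisfaction for basic modal formulas (junk value `False` on updates/quantifiers;
only used on modal formulas). -/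
def msat (M : KModel P A) : M.World → Form P A → Prop
  | s, .atom p => M.V s p
  | s, .neg φ => ¬ msat M s φ
  | s, .and φ ψ => msat M s φ ∧ msat M s ψ
  | s, .box a φ => ∀ t, M.R a s t → msat M t φ
  | _, .upd _ _ _ => False
  | _, .all _ => False

/-- Some arrow of `U` for agent `a` from outcome `o` to outcome `o'` has its (modal)
source condition true at `s` and its target condition true at `s'`. -/
def marrowOK (M : KModel P A) (U : List (Arrow P A)) (a : A) (o o' : ℕ)
    (s s' : M.World) : Prop :=
  ∃ ψ ψ', (a, o, ψ, o', ψ') ∈ U ∧ msat M s ψ ∧ msat M s' ψ'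

/-- All source and target conditions of `U` are basic modal formulas. -/
def ModalArrows (U : List (Arrow P A)) : Prop :=
  ∀ ar ∈ U, Form.Modal ar.2.2.1 ∧ Form.Modal ar.2.2.2.2

mutual
  /-- Satisfaction `M,s ⊨ φ`.  The case `upd U o φ` is interpreted in the product
  model `M*U` (inlined); `all φ` quantifies over all arrow update models with basic
  modal source and target conditions. -/
  def Form.sat : (M : KModel P A) → M.World → Form P A → Prop
    | M, s, .atom p => M.V s p
    | M, s, .neg φ => ¬ Form.sat M s φ
    | M, s, .and φ ψ => Form.sat M s φ ∧ Form.sat M s ψ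
    | M, s, .box a φ => ∀ t, M.R a s t → Form.sat M t φ
    | M, s, .upd U o φ =>
        Form.sat ⟨M.World × ℕ,
          fun a x y => M.R a x.1 y.1 ∧ satList M U a x.2 y.2 x.1 y.1,
          fun x p => M.V x.1 p⟩ (s, o) φ
    | M, s, .all φ => ∀ (U : List (Arrow P A)) (o : ℕ), ModalArrows U →
        Form.sat ⟨M.World × ℕ,
          fun a x y => M.R a x.1 y.1 ∧ marrowOK M U a x.2 y.2 x.1 y.1,
          fun x p => M.V x.1 p⟩ (s, o) φ
  termination_by M s φ => sizeOf φ

  /-- Some arrow of the list, for agent `a`, from `o` to `o'`, has its source condition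
  true at `s` and its target condition true at `s'`. -/
  def satList : (M : KModel P A) → List (Arrow P A) → A → ℕ → ℕ → M.World → M.World → Prop
    | _, [], _, _, _, _, _ => False
    | M, (b, o1, ψ, o2, ψ') :: rest, a, o, o', s, s' =>
        (b = a ∧ o1 = o ∧ o2 = o' ∧ Form.sat M s ψ ∧ Form.sat M s' ψ') ∨
        satList M rest a o o' s s'
  termination_by M U a o o' s s' => sizeOf U
end

/-- The product `M*U` of a relational model and an arrow update model. -/
def prodModel (M : KModel P A) (U : List (Arrow P A)) : KModel P A :=
  ⟨M.World × ℕ,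
   fun a x y => M.R a x.1 y.1 ∧ satList M U a x.2 y.2 x.1 y.1,
   fun x p => M.V x.1 p⟩

def Valid (φ : Form P A) : Prop := ∀ (M : KModel P A) (s : M.World), Form.sat M s φ

def Form.or (φ ψ : Form P A) : Form P A := .neg (.and (.neg φ) (.neg ψ))
def Form.imp (φ ψ : Form P A) : Form P A := .neg (.and φ (.neg ψ))
def Form.dia (a : A) (φ : Form P A) : Form P A := .neg (.box a (.neg φ))
/-- `⟨U,o⟩φ` -/
def Form.diaUpd (U : List (Arrow P A)) (o : ℕ) (φ : Form P A) : Form P A :=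
  .neg (.upd U o (.neg φ))
/-- `⟨↑⟩φ` -/
def Form.ex (φ : Form P A) : Form P A := .neg (.all (.neg φ))
/-- A canonical tautology. -/
def Form.top [Inhabited P] : Form P A := .neg (.and (.atom default) (.neg (.atom default)))
/-- Finite conjunction. -/
def Form.conj [Inhabited P] : List (Form P A) → Form P A
  | [] => Form.top
  | φ :: rest => .and φ (Form.conj rest)

/-- `Z` is a bisimulation between `M` and `N`. -/
def IsBisim (M N : KModel P A) (Z : M.World → N.World → Prop) : Prop :=
  ∀ s s', Z s s' →
    (∀ p, M.V s p ↔ N.V s' p) ∧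
    (∀ a t, M.R a s t → ∃ t', N.R a s' t' ∧ Z t t') ∧
    (∀ a t', N.R a s' t' → ∃ t, M.R a s t ∧ Z t t')

/-- Bisimilarity of pointed models. -/
def Bisimilar (M : KModel P A) (s : M.World) (N : KModel P A) (s' : N.World) : Prop :=
  ∃ Z, IsBisim M N Z ∧ Z s s'

/-- An action model: actions with accessibility relations and preconditions. -/
structure AModel (P A : Type) : Type 1 where
  Action : Type
  rel : A → Action → Action → Prop
  pre : Action → Form P A

/-- The restricted modal product `M ⊗ E`. -/
def actProd (M : KModel P A) (E : AModel P A) : KModel P A :=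
  ⟨{x : M.World × E.Action // Form.sat M x.1 (E.pre x.2)},
   fun a x y => M.R a x.1.1 y.1.1 ∧ E.rel a x.1.2 y.1.2,
   fun x p => M.V x.1.1 p⟩

/-- `M,s ⊨ [E,e]φ`: if the precondition of `e` holds at `s` then `φ` holds at `(s,e)`
in `M ⊗ E`. -/
def actSat (M : KModel P A) (E : AModel P A) (s : M.World) (e : E.Action)
    (φ : Form P A) : Prop :=
  ∀ h : Form.sat M s (E.pre e), Form.sat (actProd M E) ⟨(s, e), h⟩ φ


/-- Rename outcomes of an arrow update model along `f`. -/
def shiftArrows (f : ℕ → ℕ) (U : List (Arrow P A)) : List (Arrow P A) :=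
  U.map (fun ar => (ar.1, f ar.2.1, ar.2.2.1, f ar.2.2.2.1, ar.2.2.2.2))

/-- The combined arrow update model of Lemma `AAUL_disjunction_combination`:
outcomes are a fresh outcome `0` together with (disjoint copies of) the outcomes of
`U₁` and `U₂` (outcome `k` of `Uᵢ` is renamed to `3k+i`); it keeps all arrows of `U₁`
and `U₂`, and for each arrow `(o₁,ψ)→_a(o',ψ')` of `U₁` adds an arrow
`(0, ψ∧⟨U₁,o₁⟩φ₁)→_a(o',ψ')`, and for each arrow `(o₂,ψ)→_a(o',ψ')` of `U₂` adds an
arrow `(0, ψ∧¬⟨U₁,o₁⟩φ₁)→_a(o',ψ')`. -/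
def combineU (U1 U2 : List (Arrow P A)) (o1 o2 : ℕ) (φ1 : Form P A) :
    List (Arrow P A) :=
  shiftArrows (fun k => 3*k+1) U1 ++ shiftArrows (fun k => 3*k+2) U2 ++
  ((U1.filter (fun ar => ar.2.1 == o1)).map (fun ar =>
     (ar.1, 0, Form.and ar.2.2.1 (Form.diaUpd U1 o1 φ1), 3*ar.2.2.2.1+1, ar.2.2.2.2))) ++
  ((U2.filter (fun ar => ar.2.1 == o2)).map (fun ar =>
     (ar.1, 0, Form.and ar.2.2.1 (Form.neg (Form.diaUpd U1 o1 φ1)), 3*ar.2.2.2.1+2, ar.2.2.2.2)))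


/-!
Write `δ` for `⟨U₁,o₁⟩φ₁`. At a world `s` where `δ` holds, `(M*U, (s,0))` is bisimilar to
`(M*U₁, (s,o₁))`; where it fails, to `(M*U₂, (s,o₂))`. Formulas without the quantifier are
bisimulation invariant, so `⟨U,0⟩(φ₁∨φ₂)` becomes `⟨U₁,o₁⟩(φ₁∨φ₂)` or `⟨U₂,o₂⟩(φ₁∨φ₂)`, and
the hypotheses on `U₁` and `U₂` finish the argument, once we know `⟨U₂,o₂⟩φ₁ → ⟨↑⟩φ₁`.

That implication is the real work, since `U₂` may carry arbitrary conditions while `⟨↑⟩` only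
ranges over updates with modal conditions. A quantifier-free formula only sees a finite set of
atoms and agents up to a finite depth `k`. Over a finite signature there are finitely many
depth-`k` modal types, each defined by a characteristic modal formula, and with them one builds
a modal arrow update whose product with `M` is `k`-bisimilar to `M*U₂` at the relevant points.
-/

section Semantics

variable {M : KModel P A} {s : M.World}

@[simp]
theorem sat_neg {φ : Form P A} : Form.sat M s (.neg φ) ↔ ¬ Form.sat M s φ := by
  rw [Form.sat]

@[simp]
theorem sat_and {φ ψ : Form P A} :
    Form.sat M s (.and φ ψ) ↔ Form.sat M s φ ∧ Form.sat M s ψ := by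
  rw [Form.sat]

theorem sat_or {φ ψ : Form P A} :
    Form.sat M s (Form.or φ ψ) ↔ Form.sat M s φ ∨ Form.sat M s ψ := by
  rw [Form.or, sat_neg, sat_and, sat_neg, sat_neg]
  tauto

theorem sat_upd {U : List (Arrow P A)} {o : ℕ} {φ : Form P A} :
    Form.sat M s (.upd U o φ) ↔ Form.sat (prodModel M U) (s, o) φ := by
  rw [Form.sat]; rfl

theorem sat_diaUpd {U : List (Arrow P A)} {o : ℕ} {φ : Form P A} :
    Form.sat M s (Form.diaUpd U o φ) ↔ Form.sat (prodModel M U) (s, o) φ := by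
  rw [Form.diaUpd, sat_neg, sat_upd]
  exact not_congr sat_neg |>.trans not_not

theorem sat_diaUpd_or {U : List (Arrow P A)} {o : ℕ} {φ ψ : Form P A} :
    Form.sat M s (Form.diaUpd U o (Form.or φ ψ)) ↔
      Form.sat M s (Form.diaUpd U o φ) ∨ Form.sat M s (Form.diaUpd U o ψ) := by
  rw [sat_diaUpd, sat_diaUpd, sat_diaUpd]
  exact sat_or

/-- The product used in the semantics of `all`: arrow conditions are evaluated by `msat`. -/
def mprodModel (M : KModel P A) (U : List (Arrow P A)) : KModel P A :=
  ⟨M.World × ℕ,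
   fun a x y => M.R a x.1 y.1 ∧ marrowOK M U a x.2 y.2 x.1 y.1,
   fun x p => M.V x.1 p⟩

theorem sat_ex {φ : Form P A} :
    Form.sat M s (Form.ex φ) ↔
      ∃ U o, ModalArrows U ∧ Form.sat (mprodModel M U) (s, o) φ := by
  rw [Form.ex, sat_neg, Form.sat]
  simp only [sat_neg, not_forall, not_not, exists_prop]
  rfl

theorem sat_ex_or {φ ψ : Form P A} :
    Form.sat M s (Form.ex (Form.or φ ψ)) ↔
      Form.sat M s (Form.ex φ) ∨ Form.sat M s (Form.ex ψ) := by
  simp only [sat_ex]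
  constructor
  · rintro ⟨U, o, hU, h⟩
    exact (sat_or.1 h).imp (fun h ↦ ⟨U, o, hU, h⟩) (fun h ↦ ⟨U, o, hU, h⟩)
  · rintro (⟨U, o, hU, h⟩ | ⟨U, o, hU, h⟩)
    exacts [⟨U, o, hU, sat_or.2 (.inl h)⟩, ⟨U, o, hU, sat_or.2 (.inr h)⟩]

theorem satList_iff_mem {U : List (Arrow P A)} {a : A} {o o' : ℕ} {s' : M.World} :
    satList M U a o o' s s' ↔
      ∃ ψ ψ', (a, o, ψ, o', ψ') ∈ U ∧ Form.sat M s ψ ∧ Form.sat M s' ψ' := by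
  induction U with
  | nil => simp [satList]
  | cons ar U ih =>
    obtain ⟨b, o₁, ψ, o₂, ψ'⟩ := ar
    rw [satList, ih]
    aesop

end Semantics

section BoundedBisimulation

def BisimilarUpTo (SP : Finset P) (SA : Finset A) (M N : KModel P A) :
    ℕ → M.World → N.World → Prop
  | 0, x, y => ∀ p ∈ SP, (M.V x p ↔ N.V y p)
  | k + 1, x, y => (∀ p ∈ SP, (M.V x p ↔ N.V y p)) ∧
      (∀ a ∈ SA, ∀ x', M.R a x x' →
        ∃ y', N.R a y y' ∧ BisimilarUpTo SP SA M N k x' y') ∧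
      (∀ a ∈ SA, ∀ y', N.R a y y' →
        ∃ x', M.R a x x' ∧ BisimilarUpTo SP SA M N k x' y')

def Form.InvariantUpTo (SP : Finset P) (SA : Finset A) (k : ℕ) (θ : Form P A) : Prop :=
  ∀ (M N : KModel P A) (x : M.World) (y : N.World),
    BisimilarUpTo SP SA M N k x y → (Form.sat M x θ ↔ Form.sat N y θ)

variable {SP SP' : Finset P} {SA SA' : Finset A} {M N : KModel P A}

theorem BisimilarUpTo.atoms {k : ℕ} {x : M.World} {y : N.World}
    (h : BisimilarUpTo SP SA M N k x y) : ∀ p ∈ SP, (M.V x p ↔ N.V y p) := by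
  cases k
  exacts [h, h.1]

theorem BisimilarUpTo.mono (hP : SP ⊆ SP') (hA : SA ⊆ SA') {k k' : ℕ} (hk : k ≤ k')
    {x : M.World} {y : N.World} (h : BisimilarUpTo SP' SA' M N k' x y) :
    BisimilarUpTo SP SA M N k x y := by
  induction k generalizing k' x y with
  | zero => exact fun p hp ↦ h.atoms p (hP hp)
  | succ k ih =>
    obtain ⟨k', rfl⟩ : ∃ j, k' = j + 1 := ⟨k' - 1, by omega⟩
    obtain ⟨hV, hforth, hback⟩ := h
    refine ⟨fun p hp ↦ hV p (hP hp), fun a ha x' hx' ↦ ?_, fun a ha y' hy' ↦ ?_⟩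
    · obtain ⟨y', hy', h'⟩ := hforth a (hA ha) x' hx'
      exact ⟨y', hy', ih (by omega) h'⟩
    · obtain ⟨x', hx', h'⟩ := hback a (hA ha) y' hy'
      exact ⟨x', hx', ih (by omega) h'⟩

theorem IsBisim.bisimilarUpTo {Z : M.World → N.World → Prop} (hZ : IsBisim M N Z) (k : ℕ)
    {x : M.World} {y : N.World} (hxy : Z x y) : BisimilarUpTo SP SA M N k x y := by
  induction k generalizing x y with
  | zero => exact fun p _ ↦ (hZ x y hxy).1 p
  | succ k ih =>
    obtain ⟨hV, hforth, hback⟩ := hZ x y hxy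
    refine ⟨fun p _ ↦ hV p, fun a _ x' hx' ↦ ?_, fun a _ y' hy' ↦ ?_⟩
    · obtain ⟨y', hy', h'⟩ := hforth a x' hx'
      exact ⟨y', hy', ih h'⟩
    · obtain ⟨x', hx', h'⟩ := hback a y' hy'
      exact ⟨x', hx', ih h'⟩

namespace Form.InvariantUpTo

variable {k c : ℕ} {φ ψ : Form P A}

theorem mono (hP : SP ⊆ SP') (hA : SA ⊆ SA') {k' : ℕ} (hk : k ≤ k')
    (h : φ.InvariantUpTo SP SA k) : φ.InvariantUpTo SP' SA' k' :=
  fun M N x y hxy ↦ h M N x y (hxy.mono hP hA hk)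

theorem atom {p : P} (hp : p ∈ SP) : (Form.atom p).InvariantUpTo SP SA 0 := by
  intro M N x y hxy
  rw [Form.sat, Form.sat]
  exact hxy p hp

theorem neg (h : φ.InvariantUpTo SP SA k) : φ.neg.InvariantUpTo SP SA k :=
  fun M N x y hxy ↦ by rw [sat_neg, sat_neg, h M N x y hxy]

theorem and (hφ : φ.InvariantUpTo SP SA k) (hψ : ψ.InvariantUpTo SP SA k) :
    (φ.and ψ).InvariantUpTo SP SA k :=
  fun M N x y hxy ↦ by rw [sat_and, sat_and, hφ M N x y hxy, hψ M N x y hxy]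

theorem box {a : A} (h : φ.InvariantUpTo SP SA k) (ha : a ∈ SA) :
    (Form.box a φ).InvariantUpTo SP SA (k + 1) := by
  rintro M N x y ⟨-, hforth, hback⟩
  rw [Form.sat, Form.sat]
  constructor
  · intro hall y' hy'
    obtain ⟨x', hx', h'⟩ := hback a ha y' hy'
    exact (h M N x' y' h').1 (hall x' hx')
  · intro hall x' hx'
    obtain ⟨y', hy', h'⟩ := hforth a ha x' hx'
    exact (h M N x' y' h').2 (hall y' hy')

variable {U : List (Arrow P A)}

theorem satList_iff (hU : ∀ ar ∈ U, ar.2.2.1.InvariantUpTo SP SA c ∧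
      ar.2.2.2.2.InvariantUpTo SP SA c)
    {x x' : M.World} {y y' : N.World} (hxy : BisimilarUpTo SP SA M N c x y)
    (hxy' : BisimilarUpTo SP SA M N c x' y') {a : A} {o o' : ℕ} :
    satList M U a o o' x x' ↔ satList N U a o o' y y' := by
  simp only [satList_iff_mem]
  refine exists₂_congr fun ψ ψ' ↦ ?_
  constructor
  · rintro ⟨hmem, hψ, hψ'⟩
    exact ⟨hmem, ((hU _ hmem).1 M N x y hxy).1 hψ, ((hU _ hmem).2 M N x' y' hxy').1 hψ'⟩
  · rintro ⟨hmem, hψ, hψ'⟩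
    exact ⟨hmem, ((hU _ hmem).1 M N x y hxy).2 hψ, ((hU _ hmem).2 M N x' y' hxy').2 hψ'⟩

end Form.InvariantUpTo

variable {U : List (Arrow P A)} {c : ℕ}

/-- A round in the products costs `c` extra rounds in `M` and `N`, to evaluate the arrow
conditions at both ends. -/
theorem BisimilarUpTo.prodModel
    (hU : ∀ ar ∈ U, ar.2.2.1.InvariantUpTo SP SA c ∧ ar.2.2.2.2.InvariantUpTo SP SA c)
    (j : ℕ) {x : M.World} {y : N.World} (hxy : BisimilarUpTo SP SA M N (j + c) x y) (o : ℕ) :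
    BisimilarUpTo SP SA (prodModel M U) (prodModel N U) j (x, o) (y, o) := by
  induction j generalizing x y o with
  | zero => exact hxy.atoms
  | succ j ih =>
    have hc : BisimilarUpTo SP SA M N c x y := hxy.mono subset_rfl subset_rfl (by omega)
    obtain ⟨hV, hforth, hback⟩ : BisimilarUpTo SP SA M N (j + c + 1) x y := by
      rwa [Nat.add_right_comm] at hxy
    refine ⟨hV, ?_, ?_⟩
    · rintro a ha ⟨x', o'⟩ ⟨hx', harr⟩
      obtain ⟨y', hy', h'⟩ := hforth a ha x' hx'
      have hc' : BisimilarUpTo SP SA M N c x' y' := h'.mono subset_rfl subset_rfl (by omega)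
      exact ⟨(y', o'), ⟨hy', (Form.InvariantUpTo.satList_iff hU hc hc').1 harr⟩, ih h' o'⟩
    · rintro a ha ⟨y', o'⟩ ⟨hy', harr⟩
      obtain ⟨x', hx', h'⟩ := hback a ha y' hy'
      have hc' : BisimilarUpTo SP SA M N c x' y' := h'.mono subset_rfl subset_rfl (by omega)
      exact ⟨(x', o'), ⟨hx', (Form.InvariantUpTo.satList_iff hU hc hc').2 harr⟩, ih h' o'⟩

theorem Form.InvariantUpTo.upd {φ : Form P A} {j : ℕ} (hφ : φ.InvariantUpTo SP SA j)
    (hU : ∀ ar ∈ U, ar.2.2.1.InvariantUpTo SP SA c ∧ ar.2.2.2.2.InvariantUpTo SP SA c)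
    (o : ℕ) : (Form.upd U o φ).InvariantUpTo SP SA (j + c) := by
  intro M N x y hxy
  rw [sat_upd, sat_upd]
  exact hφ _ _ _ _ (hxy.prodModel hU j o)

theorem exists_invariantUpTo_of_forall_mem {L : List (Form P A)}
    (h : ∀ θ ∈ L, ∃ SP SA k, θ.InvariantUpTo SP SA k) :
    ∃ SP SA k, ∀ θ ∈ L, θ.InvariantUpTo SP SA k := by
  classical
  induction L with
  | nil => exact ⟨∅, ∅, 0, by simp⟩
  | cons θ L ih =>
    obtain ⟨SP₁, SA₁, k₁, hθ⟩ := h θ List.mem_cons_self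
    obtain ⟨SP₂, SA₂, k₂, hL⟩ := ih fun θ' hθ' ↦ h θ' (List.mem_cons_of_mem θ hθ')
    refine ⟨SP₁ ∪ SP₂, SA₁ ∪ SA₂, max k₁ k₂, ?_⟩
    rintro θ' (_ | ⟨_, hθ'⟩)
    · exact hθ.mono Finset.subset_union_left Finset.subset_union_left (le_max_left _ _)
    · exact (hL θ' hθ').mono Finset.subset_union_right Finset.subset_union_right
        (le_max_right _ _)

theorem Form.NoQuant.exists_invariantUpTo {θ : Form P A} (h : θ.NoQuant) :
    ∃ SP SA k, θ.InvariantUpTo SP SA k := by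
  classical
  induction h with
  | atom p => exact ⟨{p}, ∅, 0, .atom (Finset.mem_singleton_self p)⟩
  | neg _ ih =>
    obtain ⟨SP, SA, k, h⟩ := ih
    exact ⟨SP, SA, k, h.neg⟩
  | and _ _ ih₁ ih₂ =>
    obtain ⟨SP₁, SA₁, k₁, h₁⟩ := ih₁
    obtain ⟨SP₂, SA₂, k₂, h₂⟩ := ih₂
    exact ⟨SP₁ ∪ SP₂, SA₁ ∪ SA₂, max k₁ k₂,
      (h₁.mono Finset.subset_union_left Finset.subset_union_left (le_max_left _ _)).and
        (h₂.mono Finset.subset_union_right Finset.subset_union_right (le_max_right _ _))⟩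
  | box a _ ih =>
    obtain ⟨SP, SA, k, h⟩ := ih
    exact ⟨SP, insert a SA, k + 1,
      (h.mono subset_rfl (Finset.subset_insert a SA) le_rfl).box (Finset.mem_insert_self a SA)⟩
  | @upd U o φ _ _ _ ihφ ihsrc ihtgt =>
    obtain ⟨SP₁, SA₁, j, hφ⟩ := ihφ
    obtain ⟨SP₂, SA₂, c, hU⟩ := exists_invariantUpTo_of_forall_mem
      (L := U.map (·.2.2.1) ++ U.map (·.2.2.2.2)) (by
        simp only [List.mem_append, List.mem_map]
        rintro θ (⟨ar, hmem, rfl⟩ | ⟨ar, hmem, rfl⟩)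
        exacts [ihsrc ar hmem, ihtgt ar hmem])
    refine ⟨SP₁ ∪ SP₂, SA₁ ∪ SA₂, j + c,
      (hφ.mono Finset.subset_union_left Finset.subset_union_left le_rfl).upd
        (fun ar hmem ↦ ⟨?_, ?_⟩) o⟩
    all_goals refine (hU _ ?_).mono Finset.subset_union_right Finset.subset_union_right le_rfl
    all_goals simp only [List.mem_append, List.mem_map]
    exacts [.inl ⟨ar, hmem, rfl⟩, .inr ⟨ar, hmem, rfl⟩]

theorem IsBisim.sat_iff {Z : M.World → N.World → Prop} (hZ : IsBisim M N Z)
    {x : M.World} {y : N.World} (hxy : Z x y) {θ : Form P A} (hθ : θ.NoQuant) :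
    Form.sat M x θ ↔ Form.sat N y θ := by
  obtain ⟨SP, SA, k, h⟩ := hθ.exists_invariantUpTo
  exact h M N x y (hZ.bisimilarUpTo k hxy)

end BoundedBisimulation

section Combination

variable {M : KModel P A} {a : A} {x y : ℕ} {t t' : M.World}

theorem satList_append {L₁ L₂ : List (Arrow P A)} :
    satList M (L₁ ++ L₂) a x y t t' ↔
      satList M L₁ a x y t t' ∨ satList M L₂ a x y t t' := by
  simp only [satList_iff_mem, List.mem_append, or_and_right, exists_or]

theorem satList_shiftArrows {f : ℕ → ℕ} {U : List (Arrow P A)} :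
    satList M (shiftArrows f U) a x y t t' ↔
      ∃ k k', x = f k ∧ y = f k' ∧ satList M U a k k' t t' := by
  simp only [satList_iff_mem, shiftArrows, List.mem_map, Prod.mk.injEq]
  aesop

def rootArrows (f : ℕ → ℕ) (χ : Form P A) (o : ℕ) (U : List (Arrow P A)) :
    List (Arrow P A) :=
  (U.filter (fun ar => ar.2.1 == o)).map
    (fun ar => (ar.1, 0, Form.and ar.2.2.1 χ, f ar.2.2.2.1, ar.2.2.2.2))

theorem satList_rootArrows {f : ℕ → ℕ} {χ : Form P A} {o : ℕ} {U : List (Arrow P A)} :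
    satList M (rootArrows f χ o U) a x y t t' ↔
      x = 0 ∧ Form.sat M t χ ∧ ∃ k', y = f k' ∧ satList M U a o k' t t' := by
  simp only [satList_iff_mem, rootArrows, List.mem_map, List.mem_filter, Prod.mk.injEq,
    beq_iff_eq]
  aesop

theorem satList_combineU {U₁ U₂ : List (Arrow P A)} {o₁ o₂ : ℕ} {φ : Form P A} :
    satList M (combineU U₁ U₂ o₁ o₂ φ) a x y t t' ↔
      (∃ k k', x = 3 * k + 1 ∧ y = 3 * k' + 1 ∧ satList M U₁ a k k' t t') ∨
      (∃ k k', x = 3 * k + 2 ∧ y = 3 * k' + 2 ∧ satList M U₂ a k k' t t') ∨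
      (x = 0 ∧ Form.sat M t (Form.diaUpd U₁ o₁ φ) ∧
        ∃ k', y = 3 * k' + 1 ∧ satList M U₁ a o₁ k' t t') ∨
      (x = 0 ∧ Form.sat M t (.neg (Form.diaUpd U₁ o₁ φ)) ∧
        ∃ k', y = 3 * k' + 2 ∧ satList M U₂ a o₂ k' t t') := by
  have hsplit : combineU U₁ U₂ o₁ o₂ φ =
      shiftArrows (3 * · + 1) U₁ ++ shiftArrows (3 * · + 2) U₂ ++
        rootArrows (3 * · + 1) (Form.diaUpd U₁ o₁ φ) o₁ U₁ ++
        rootArrows (3 * · + 2) (.neg (Form.diaUpd U₁ o₁ φ)) o₂ U₂ := rfl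
  rw [hsplit]
  simp only [satList_append, satList_shiftArrows, satList_rootArrows, or_assoc]

theorem isBisim_prodModel_of_embedding {V W : List (Arrow P A)} (e : ℕ → ℕ) (s : M.World)
    (o r : ℕ)
    (hstep : ∀ a k y (t t' : M.World),
      satList M W a (e k) y t t' ↔ ∃ k', y = e k' ∧ satList M V a k k' t t')
    (hroot : ∀ a y (t' : M.World),
      satList M W a r y s t' ↔ ∃ k', y = e k' ∧ satList M V a o k' s t') :
    IsBisim (prodModel M V) (prodModel M W)
      (fun x y ↦ x.1 = y.1 ∧ (y.2 = e x.2 ∨ (x = (s, o) ∧ y.2 = r))) := by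
  rintro ⟨t, k⟩ ⟨_, l⟩ ⟨rfl, hl⟩
  have harrows : ∀ a y t',
      satList M W a l y t t' ↔ ∃ k', y = e k' ∧ satList M V a k k' t t' := by
    rcases hl with rfl | ⟨hx, rfl⟩
    · exact fun a y t' ↦ hstep a k y t t'
    · obtain ⟨rfl, rfl⟩ := Prod.mk.inj hx
      exact hroot
  refine ⟨fun p ↦ Iff.rfl, ?_, ?_⟩
  · rintro a ⟨t', k'⟩ ⟨ht', hV⟩
    exact ⟨(t', e k'), ⟨ht', (harrows a _ t').2 ⟨k', rfl, hV⟩⟩, rfl, .inl rfl⟩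
  · rintro a ⟨t', y⟩ ⟨ht', hW⟩
    obtain ⟨k', rfl, hV⟩ := (harrows a y t').1 hW
    exact ⟨(t', k'), ⟨ht', hV⟩, rfl, .inl rfl⟩

variable {U₁ U₂ : List (Arrow P A)} {o₁ o₂ : ℕ} {φ : Form P A} {s : M.World}

theorem isBisim_combineU_of_sat (hδ : Form.sat M s (Form.diaUpd U₁ o₁ φ)) :
    IsBisim (prodModel M U₁) (prodModel M (combineU U₁ U₂ o₁ o₂ φ))
      (fun x y ↦ x.1 = y.1 ∧ (y.2 = 3 * x.2 + 1 ∨ (x = (s, o₁) ∧ y.2 = 0))) := by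
  refine isBisim_prodModel_of_embedding (3 * · + 1) s o₁ 0 (fun a k y t t' ↦ ?_)
    (fun a y t' ↦ ?_) <;> rw [satList_combineU]
  · constructor
    · rintro (⟨j, k', hj, rfl, h⟩ | ⟨_, _, _, _, _⟩ | ⟨_, _⟩ | ⟨_, _⟩)
      · obtain rfl : j = k := by omega
        exact ⟨k', rfl, h⟩
      all_goals omega
    · rintro ⟨k', rfl, h⟩
      exact .inl ⟨k, k', rfl, rfl, h⟩
  · constructor
    · rintro (⟨_, _, _, _, _⟩ | ⟨_, _, _, _, _⟩ | ⟨-, -, h⟩ | ⟨-, hn, -⟩)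
      · omega
      · omega
      · exact h
      · exact absurd hδ (sat_neg.1 hn)
    · intro h
      exact .inr (.inr (.inl ⟨rfl, hδ, h⟩))

theorem isBisim_combineU_of_not_sat (hδ : ¬ Form.sat M s (Form.diaUpd U₁ o₁ φ)) :
    IsBisim (prodModel M U₂) (prodModel M (combineU U₁ U₂ o₁ o₂ φ))
      (fun x y ↦ x.1 = y.1 ∧ (y.2 = 3 * x.2 + 2 ∨ (x = (s, o₂) ∧ y.2 = 0))) := by
  refine isBisim_prodModel_of_embedding (3 * · + 2) s o₂ 0 (fun a k y t t' ↦ ?_)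
    (fun a y t' ↦ ?_) <;> rw [satList_combineU]
  · constructor
    · rintro (⟨_, _, _, _, _⟩ | ⟨j, k', hj, rfl, h⟩ | ⟨_, _⟩ | ⟨_, _⟩)
      · omega
      · obtain rfl : j = k := by omega
        exact ⟨k', rfl, h⟩
      all_goals omega
    · rintro ⟨k', rfl, h⟩
      exact .inr (.inl ⟨k, k', rfl, rfl, h⟩)
  · constructor
    · rintro (⟨_, _, _, _, _⟩ | ⟨_, _, _, _, _⟩ | ⟨-, hp, -⟩ | ⟨-, -, h⟩)
      · omega
      · omega
      · exact absurd hp hδ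
      · exact h
    · intro h
      exact .inr (.inr (.inr ⟨rfl, sat_neg.2 hδ, h⟩))

theorem sat_diaUpd_combineU_of_sat (hδ : Form.sat M s (Form.diaUpd U₁ o₁ φ)) {θ : Form P A}
    (hθ : θ.NoQuant) :
    Form.sat M s (Form.diaUpd (combineU U₁ U₂ o₁ o₂ φ) 0 θ) ↔
      Form.sat M s (Form.diaUpd U₁ o₁ θ) := by
  rw [sat_diaUpd, sat_diaUpd]
  exact ((isBisim_combineU_of_sat hδ).sat_iff (x := (s, o₁)) (y := (s, 0))
    ⟨rfl, .inr ⟨rfl, rfl⟩⟩ hθ).symm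

theorem sat_diaUpd_combineU_of_not_sat (hδ : ¬ Form.sat M s (Form.diaUpd U₁ o₁ φ))
    {θ : Form P A} (hθ : θ.NoQuant) :
    Form.sat M s (Form.diaUpd (combineU U₁ U₂ o₁ o₂ φ) 0 θ) ↔
      Form.sat M s (Form.diaUpd U₂ o₂ θ) := by
  rw [sat_diaUpd, sat_diaUpd]
  exact ((isBisim_combineU_of_not_sat hδ).sat_iff (x := (s, o₂)) (y := (s, 0))
    ⟨rfl, .inr ⟨rfl, rfl⟩⟩ hθ).symm

end Combination

section Unravel

variable (SA : Finset A)

def Unravel (L : ℕ → Type) : ℕ → Type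
  | 0 => L 0
  | k + 1 => L (k + 1) × (SA → Set (Unravel L k))

variable {SA} {L : ℕ → Type}

def Unravel.label : ∀ {k}, Unravel SA L k → L k
  | 0, T => T
  | _ + 1, T => T.1

instance Unravel.finite [∀ k, Finite (L k)] : ∀ k, Finite (Unravel SA L k)
  | 0 => inferInstanceAs (Finite (L 0))
  | k + 1 =>
    have := Unravel.finite k
    inferInstanceAs (Finite (L (k + 1) × (SA → Set (Unravel SA L k))))

variable (SA) in
def unravel (N : KModel P A) (lab : ∀ k, N.World → L k) : ∀ k, N.World → Unravel SA L k
  | 0, n => lab 0 n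
  | k + 1, n => (lab (k + 1) n, fun a : SA ↦ unravel N lab k '' {n' | N.R a n n'})

variable {N : KModel P A} {lab : ∀ k, N.World → L k}

@[simp]
theorem label_unravel (k : ℕ) (n : N.World) : (unravel SA N lab k n).label = lab k n := by
  cases k <;> rfl

end Unravel

section Encode

variable {X : ℕ → Type} [∀ k, Finite (X k)]

noncomputable def encodeSigma (k : ℕ) (x : X k) : ℕ := Nat.pair k (Finite.equivFin (X k) x)

theorem eq_of_encodeSigma_eq {k k' : ℕ} {x : X k} {x' : X k'}
    (h : encodeSigma k x = encodeSigma k' x') : k = k' :=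
  (Nat.pair_eq_pair.1 h).1

theorem encodeSigma_injective (k : ℕ) : Function.Injective (encodeSigma (X := X) k) :=
  fun _ _ h ↦ (Finite.equivFin (X k)).injective (Fin.ext (Nat.pair_eq_pair.1 h).2)

end Encode

section Types

variable (SP : Finset P) (SA : Finset A)

abbrev ModalType (k : ℕ) : Type := Unravel SA (fun _ ↦ SP → Prop) k

def modalType (M : KModel P A) : ∀ k, M.World → ModalType SP SA k :=
  unravel SA M (fun _ x p ↦ M.V x p)

theorem modalType_succ (M : KModel P A) (k : ℕ) (x : M.World) :
    modalType SP SA M (k + 1) x =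
      ((fun p : SP ↦ M.V x p), fun a : SA ↦ modalType SP SA M k '' {y | M.R a x y}) :=
  rfl

abbrev JointType (k : ℕ) : Type := Unravel SA (ModalType SP SA) k

/-- Unlike the modal type of `π n`, this determines the joint types of the successors of `n`
in `N`, so that an arrow read off at one world of `N` can be followed from any world of the same
joint type. -/
def jointType (M N : KModel P A) (π : N.World → M.World) :
    ∀ k, N.World → JointType SP SA k :=
  unravel SA N (fun k n ↦ modalType SP SA M k (π n))

variable {SP SA} {M : KModel P A}

theorem modalType_eq_atoms {k : ℕ} {x y : M.World}
    (h : modalType SP SA M k x = modalType SP SA M k y) : ∀ p ∈ SP, (M.V x p ↔ M.V y p) :=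
  fun p hp ↦ by
    simpa [modalType] using congrFun (congrArg Unravel.label h) ⟨p, hp⟩

@[simp]
theorem label_jointType {N : KModel P A} {π : N.World → M.World} (k : ℕ) (n : N.World) :
    (jointType SP SA M N π k n).label = modalType SP SA M k (π n) :=
  label_unravel k n

end Types

section CharacteristicFormula

variable {M : KModel P A} {x : M.World}

theorem msat_dia {a : A} {φ : Form P A} :
    msat M x (Form.dia a φ) ↔ ∃ y, M.R a x y ∧ msat M y φ := by
  simp [Form.dia, msat]

variable [Inhabited P]

def Form.disj (L : List (Form P A)) : Form P A := .neg (Form.conj (L.map .neg))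

variable {L : List (Form P A)}

theorem msat_conj : msat M x (Form.conj L) ↔ ∀ φ ∈ L, msat M x φ := by
  induction L with
  | nil => simp [Form.conj, Form.top, msat]
  | cons φ L ih => simp [Form.conj, msat, ih]

theorem msat_disj : msat M x (Form.disj L) ↔ ∃ φ ∈ L, msat M x φ := by
  simp [Form.disj, msat, msat_conj]

theorem Form.Modal.conj (h : ∀ φ ∈ L, φ.Modal) : (Form.conj L).Modal := by
  induction L with
  | nil => exact .neg (.and (.atom _) (.neg (.atom _)))
  | cons φ L ih => exact .and (h φ List.mem_cons_self) (ih fun ψ hψ ↦ h ψ (.tail φ hψ))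

theorem Form.Modal.disj (h : ∀ φ ∈ L, φ.Modal) : (Form.disj L).Modal := by
  refine .neg (.conj ?_)
  simp only [List.mem_map]
  rintro _ ⟨φ, hφ, rfl⟩
  exact .neg (h φ hφ)

variable (SP : Finset P) (SA : Finset A)

open Classical in
noncomputable def atomsForm (v : SP → Prop) : Form P A :=
  Form.conj (SP.attach.toList.map fun p ↦ if v p then .atom p else .neg (.atom p))

noncomputable def charForm : ∀ k, ModalType SP SA k → Form P A
  | 0, T => atomsForm SP T
  | k + 1, T => .and (atomsForm SP T.1) (Form.conj (SA.attach.toList.map fun a ↦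
      let succ := (Set.toFinite (T.2 a)).toFinset.toList.map (charForm k)
      .and (Form.conj (succ.map (Form.dia a))) (.box a (Form.disj succ))))

theorem modal_atomsForm (v : SP → Prop) : (atomsForm SP v : Form P A).Modal := by
  refine .conj ?_
  simp only [List.mem_map]
  rintro _ ⟨p, -, rfl⟩
  split_ifs
  exacts [.atom _, .neg (.atom _)]

theorem modal_charForm : ∀ k (T : ModalType SP SA k), (charForm SP SA k T).Modal
  | 0, T => modal_atomsForm SP T
  | k + 1, T => by
    refine .and (modal_atomsForm SP _) (.conj ?_)
    simp only [List.mem_map]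
    rintro _ ⟨a, -, rfl⟩
    refine .and (.conj ?_) (.box _ (.disj ?_)) <;> simp only [List.mem_map]
    · rintro _ ⟨_, ⟨S, -, rfl⟩, rfl⟩
      exact .neg (.box _ (.neg (modal_charForm k S)))
    · rintro _ ⟨S, -, rfl⟩
      exact modal_charForm k S

variable {SP SA}

theorem msat_atomsForm {v : SP → Prop} :
    msat M x (atomsForm SP v : Form P A) ↔ (fun p : SP ↦ M.V x p) = v := by
  simp only [atomsForm, msat_conj, List.mem_map, Finset.mem_toList, Finset.mem_attach, true_and,
    forall_exists_index, forall_apply_eq_imp_iff, funext_iff, eq_iff_iff]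
  refine forall_congr' fun p ↦ ?_
  by_cases hp : v p <;> simp [hp, msat]

theorem msat_charForm (k : ℕ) (T : ModalType SP SA k) :
    msat M x (charForm SP SA k T) ↔ modalType SP SA M k x = T := by
  induction k generalizing x with
  | zero => exact msat_atomsForm
  | succ k ih =>
    rw [charForm, msat, msat_atomsForm (P := P), msat_conj, modalType_succ]
    refine Iff.trans ?_ Prod.ext_iff.symm
    refine and_congr Iff.rfl (Iff.trans ?_ funext_iff.symm)
    simp only [List.mem_map, Finset.mem_toList, Finset.mem_attach, true_and, forall_exists_index,
      forall_apply_eq_imp_iff]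
    refine forall_congr' fun a ↦ ?_
    rw [msat, msat_conj, msat, Set.Subset.antisymm_iff, Set.image_subset_iff, and_comm]
    simp only [List.mem_map, Finset.mem_toList, Set.Finite.mem_toFinset, msat_disj,
      exists_exists_and_eq_and, forall_exists_index, and_imp, forall_apply_eq_imp_iff₂, msat_dia,
      ih, exists_eq_right', Set.subset_def, Set.mem_preimage, Set.mem_image, Set.mem_ofPred_eq]

end CharacteristicFormula

section Synthesis

variable [Inhabited P] (SP : Finset P) (SA : Finset A) (M N : KModel P A)
  (π : N.World → M.World)

noncomputable def synthArrow (k : ℕ) (a : A) (J : JointType SP SA (k + 1))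
    (J' : JointType SP SA k) : Arrow P A :=
  (a, encodeSigma (k + 1) J, charForm SP SA (k + 1) J.label,
    encodeSigma k J', charForm SP SA k J'.label)

/-- Outcome `encodeSigma k J` stands for a world of `N` of joint type `J` with `k` rounds left. -/
def synthSet (d : ℕ) : Set (Arrow P A) :=
  {ar | ∃ k < d, ∃ a ∈ SA, ∃ n n', N.R a n n' ∧
    ar = synthArrow SP SA k a (jointType SP SA M N π (k + 1) n) (jointType SP SA M N π k n')}

theorem synthSet_finite (d : ℕ) : (synthSet SP SA M N π d).Finite := by
  refine (Set.finite_range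
    fun x : (Σ k : Fin d, SA × JointType SP SA (k + 1) × JointType SP SA k) ↦
      synthArrow SP SA x.1 x.2.1 x.2.2.1 x.2.2.2).subset ?_
  rintro _ ⟨k, hk, a, ha, n, n', -, rfl⟩
  exact ⟨⟨⟨k, hk⟩, ⟨a, ha⟩, _, _⟩, rfl⟩

noncomputable def synthArrows (d : ℕ) : List (Arrow P A) :=
  (synthSet_finite SP SA M N π d).toFinset.toList

variable {SP SA M N π}

theorem mem_synthArrows {d : ℕ} {ar : Arrow P A} :
    ar ∈ synthArrows SP SA M N π d ↔ ar ∈ synthSet SP SA M N π d := by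
  simp [synthArrows]

theorem modalArrows_synthArrows {d : ℕ} : ModalArrows (synthArrows SP SA M N π d) := by
  intro ar har
  obtain ⟨k, -, a, -, n, n', -, rfl⟩ := mem_synthArrows.1 har
  exact ⟨modal_charForm SP SA _ _, modal_charForm SP SA _ _⟩

theorem bisimilarUpTo_synthArrows (hV : ∀ n p, N.V n p ↔ M.V (π n) p)
    (hR : ∀ a n n', N.R a n n' → M.R a (π n) (π n')) {d r : ℕ} (hr : r ≤ d)
    {w : M.World} {n : N.World} (hw : modalType SP SA M r w = modalType SP SA M r (π n)) :
    BisimilarUpTo SP SA (mprodModel M (synthArrows SP SA M N π d)) N r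
      (w, encodeSigma r (jointType SP SA M N π r n)) n := by
  induction r generalizing w n with
  | zero => exact fun p hp ↦ (modalType_eq_atoms hw p hp).trans (hV n p).symm
  | succ r ih =>
    refine ⟨fun p hp ↦ (modalType_eq_atoms hw p hp).trans (hV n p).symm, ?_, ?_⟩
    · rintro a ha ⟨w', c'⟩ ⟨hw', ψ, ψ', hmem, hψ, hψ'⟩
      obtain ⟨k, -, b, -, m, m', hm, heq⟩ := mem_synthArrows.1 hmem
      simp only [synthArrow, Prod.mk.injEq] at heq
      obtain ⟨rfl, hcode, rfl, rfl, rfl⟩ := heq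
      obtain rfl : r = k := by have := eq_of_encodeSigma_eq hcode; omega
      have hJ := encodeSigma_injective _ hcode
      obtain ⟨n', hn', hJ'⟩ : ∃ n', N.R a n n' ∧
          jointType SP SA M N π r n' = jointType SP SA M N π r m' := by
        have hmem' : jointType SP SA M N π r m' ∈
            (jointType SP SA M N π (r + 1) m).2 ⟨a, ha⟩ := ⟨m', hm, rfl⟩
        rwa [← hJ] at hmem'
      rw [msat_charForm, label_jointType] at hψ'
      have htype : modalType SP SA M r w' = modalType SP SA M r (π n') := by
        rw [hψ', ← label_jointType (SP := SP) (SA := SA) (π := π), ← hJ', label_jointType]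
      exact ⟨n', hn', hJ' ▸ ih (by omega) htype⟩
    · intro a ha n' hn'
      obtain ⟨w', hw', htype⟩ : ∃ w', M.R a w w' ∧
          modalType SP SA M r w' = modalType SP SA M r (π n') := by
        have hmem : modalType SP SA M r (π n') ∈
            (modalType SP SA M (r + 1) (π n)).2 ⟨a, ha⟩ := ⟨π n', hR a n n' hn', rfl⟩
        rwa [← hw] at hmem
      refine ⟨(w', encodeSigma r (jointType SP SA M N π r n')),
        ⟨hw', _, _, mem_synthArrows.2 ⟨r, by omega, a, ha, n, n', hn', rfl⟩, ?_, ?_⟩,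
        ih (by omega) htype⟩
      · rw [msat_charForm, label_jointType]
        exact hw
      · rw [msat_charForm, label_jointType]
        exact htype

end Synthesis

theorem Form.NoQuant.nonempty_atoms {φ : Form P A} (h : φ.NoQuant) : Nonempty P := by
  induction h with
  | atom p => exact ⟨p⟩
  | neg _ ih | and _ _ ih | box _ _ ih | upd _ _ _ _ ih => exact ih

theorem sat_ex_of_projection {M N : KModel P A} (π : N.World → M.World)
    (hV : ∀ n p, N.V n p ↔ M.V (π n) p) (hR : ∀ a n n', N.R a n n' → M.R a (π n) (π n'))
    {φ : Form P A} (hφ : φ.NoQuant) {n : N.World} (h : Form.sat N n φ) :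
    Form.sat M (π n) (Form.ex φ) := by
  have : Inhabited P := Classical.inhabited_of_nonempty hφ.nonempty_atoms
  obtain ⟨SP, SA, k, hinv⟩ := hφ.exists_invariantUpTo
  exact sat_ex.2 ⟨synthArrows SP SA M N π k, _, modalArrows_synthArrows,
    (hinv _ _ _ _ (bisimilarUpTo_synthArrows hV hR le_rfl rfl)).2 h⟩

theorem sat_ex_of_sat_diaUpd {M : KModel P A} {U : List (Arrow P A)} {s : M.World}
    {o : ℕ} {φ : Form P A} (hφ : φ.NoQuant) (h : Form.sat M s (Form.diaUpd U o φ)) :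
    Form.sat M s (Form.ex φ) :=
  sat_ex_of_projection (N := prodModel M U) Prod.fst (fun _ _ ↦ Iff.rfl) (fun _ _ _ h ↦ h.1)
    hφ (sat_diaUpd.1 h)

/-- disjunction synthesis combination: if `⊨ ⟨↑⟩φᵢ ↔ ⟨Uᵢ,oᵢ⟩φᵢ` for
`i = 1,2` then `⊨ ⟨↑⟩(φ₁∨φ₂) ↔ ⟨U,o⟩(φ₁∨φ₂)` for the combined arrow update model
`U` with fresh point `o = 0`. -/
theorem disjunction_combination (P A : Type) (φ1 φ2 : Form P A)
    (h1 : φ1.NoQuant) (h2 : φ2.NoQuant)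
    (U1 U2 : List (Arrow P A)) (o1 o2 : ℕ)
    (hU1 : ∀ (M : KModel P A) (s : M.World),
      Form.sat M s (Form.ex φ1) ↔ Form.sat M s (Form.diaUpd U1 o1 φ1))
    (hU2 : ∀ (M : KModel P A) (s : M.World),
      Form.sat M s (Form.ex φ2) ↔ Form.sat M s (Form.diaUpd U2 o2 φ2)) :
    ∀ (M : KModel P A) (s : M.World),
      Form.sat M s (Form.ex (Form.or φ1 φ2)) ↔
        Form.sat M s (Form.diaUpd (combineU U1 U2 o1 o2 φ1) 0 (Form.or φ1 φ2)) := by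
  intro M s
  have hor : (Form.or φ1 φ2).NoQuant := .neg (.and (.neg h1) (.neg h2))
  rw [sat_ex_or]
  by_cases hδ : Form.sat M s (Form.diaUpd U1 o1 φ1)
  · rw [sat_diaUpd_combineU_of_sat hδ hor, sat_diaUpd_or]
    exact iff_of_true (.inl ((hU1 M s).2 hδ)) (.inl hδ)
  · rw [sat_diaUpd_combineU_of_not_sat hδ hor, sat_diaUpd_or, ← hU2, hU1]
    have : ¬ Form.sat M s (Form.diaUpd U2 o2 φ1) :=
      fun h ↦ hδ ((hU1 M s).1 (sat_ex_of_sat_diaUpd h1 h))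
    tauto

end AAUML
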